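/- arXiv:1905.07784 — 6 statements merged into one kernel-verified Lean document; each statement's English description precedes it below -/
import Mathlib

section
/- Let G = ⟨g, t⟩ be a group generated by two elements g and t such that [g, t, t, ..., t] = 1 (n copies of t). Then the normal closure of ⟨g⟩ in G is generated by the set {g^(tⁱ) : i = 0, 1, ..., n-1}. -/
open scoped commutatorElement

/-- Iterated (Engel) commutator: `engel a b 0 = a`, `engel a b (i+1) = ⁅engel a b i, b⁆`. -/
def engel {G : Type*} [Group G] (a b : G) : ℕ → G
  | 0 => a
  | n + 1 => ⁅engel a b n, b⁆

section aux

variable {G : Type*} [Group G]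

lemma engel_conj (a b s : G) : ∀ k, s⁻¹ * engel a b k * s = engel (s⁻¹ * a * s) (s⁻¹ * b * s) k
  | 0 => rfl
  | k + 1 => by
    show s⁻¹ * ⁅engel a b k, b⁆ * s = ⁅engel (s⁻¹ * a * s) (s⁻¹ * b * s) k, s⁻¹ * b * s⁆
    rw [← engel_conj a b s k]
    simp only [commutatorElement_def]
    group

lemma engel_shift (a t : G) (k : ℕ) :
    engel (t * a * t⁻¹) t k = (engel a t (k + 1))⁻¹ * engel a t k := by
  have h := engel_conj a t t⁻¹ k
  simp only [inv_inv] at h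
  have ht : t * t * t⁻¹ = t := by group
  rw [ht] at h
  rw [← h, show engel a t (k + 1) = ⁅engel a t k, t⁆ from rfl, commutatorElement_def]
  group

lemma engel_mem (a t : G) : ∀ k,
    engel a t k ∈ Subgroup.closure {x : G | ∃ i : ℕ, i ≤ k ∧ x = t ^ i * a * (t ^ i)⁻¹}
  | 0 => Subgroup.subset_closure ⟨0, le_refl 0, by simp [engel]⟩
  | k + 1 => by
    have h1 : engel a t k ∈ Subgroup.closure
        {x : G | ∃ i : ℕ, i ≤ k + 1 ∧ x = t ^ i * a * (t ^ i)⁻¹} := by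
      refine Subgroup.closure_mono ?_ (engel_mem a t k)
      rintro x ⟨i, hi, rfl⟩; exact ⟨i, hi.trans (Nat.le_succ k), rfl⟩
    have h2 : engel (t * a * t⁻¹) t k ∈ Subgroup.closure
        {x : G | ∃ i : ℕ, i ≤ k + 1 ∧ x = t ^ i * a * (t ^ i)⁻¹} := by
      refine Subgroup.closure_mono ?_ (engel_mem (t * a * t⁻¹) t k)
      rintro x ⟨i, hi, rfl⟩
      refine ⟨i + 1, Nat.succ_le_succ hi, ?_⟩
      rw [pow_succ']
      group
    have key : engel a t (k + 1) = engel a t k * (engel (t * a * t⁻¹) t k)⁻¹ := by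
      rw [engel_shift]; group
    rw [key]
    exact mul_mem h1 (inv_mem h2)

/-- top extraction -/
lemma engel_top (t : G) : ∀ (k : ℕ) (a : G),
    t ^ k * a * (t ^ k)⁻¹ ∈ Subgroup.closure
      ({x : G | ∃ i : ℕ, i < k ∧ x = t ^ i * a * (t ^ i)⁻¹} ∪ {engel a t k})
  | 0, a => by
    refine Subgroup.subset_closure (Or.inr ?_)
    simp [engel]
  | k + 1, a => by
    set K := Subgroup.closure
      ({x : G | ∃ i : ℕ, i < k + 1 ∧ x = t ^ i * a * (t ^ i)⁻¹} ∪ {engel a t (k + 1)}) with hK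
    have ih := engel_top t k (t * a * t⁻¹)
    have hle : Subgroup.closure
        ({x : G | ∃ i : ℕ, i < k ∧ x = t ^ i * (t * a * t⁻¹) * (t ^ i)⁻¹}
          ∪ {engel (t * a * t⁻¹) t k}) ≤ K := by
      rw [Subgroup.closure_le]
      rintro x (⟨i, hi, rfl⟩ | hx)
      · refine Subgroup.subset_closure (Or.inl ⟨i + 1, Nat.succ_lt_succ hi, ?_⟩)
        rw [pow_succ']; group
      · rcases Set.mem_singleton_iff.mp hx with rfl
        rw [engel_shift]
        refine mul_mem (inv_mem (Subgroup.subset_closure (Or.inr rfl))) ?_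
        refine (Subgroup.closure_le K).mpr ?_ (engel_mem a t k)
        rintro y ⟨i, hi, rfl⟩
        exact Subgroup.subset_closure (Or.inl ⟨i, Nat.lt_succ_of_le hi, rfl⟩)
    have := hle ih
    have heq : t ^ k * (t * a * t⁻¹) * (t ^ k)⁻¹ = t ^ (k + 1) * a * (t ^ (k + 1))⁻¹ := by
      rw [pow_succ']; group
    rwa [heq] at this

/-- bottom extraction -/
lemma engel_bot (t : G) : ∀ (k : ℕ) (a : G),
    a ∈ Subgroup.closure
      ({x : G | ∃ i : ℕ, 1 ≤ i ∧ i ≤ k ∧ x = t ^ i * a * (t ^ i)⁻¹} ∪ {engel a t k})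
  | 0, a => Subgroup.subset_closure (Or.inr (by simp [engel]))
  | k + 1, a => by
    set K := Subgroup.closure
      ({x : G | ∃ i : ℕ, 1 ≤ i ∧ i ≤ k + 1 ∧ x = t ^ i * a * (t ^ i)⁻¹}
        ∪ {engel a t (k + 1)}) with hK
    have ih := engel_bot t k a
    refine (Subgroup.closure_le K).mpr ?_ ih
    rintro x (⟨i, h1, h2, rfl⟩ | hx)
    · exact Subgroup.subset_closure (Or.inl ⟨i, h1, h2.trans (Nat.le_succ k), rfl⟩)
    · rcases Set.mem_singleton_iff.mp hx with rfl
      have : engel a t k = engel a t (k + 1) * engel (t * a * t⁻¹) t k := by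
        rw [engel_shift]; group
      rw [this]
      refine mul_mem (Subgroup.subset_closure (Or.inr rfl)) ?_
      refine (Subgroup.closure_le K).mpr ?_ (engel_mem (t * a * t⁻¹) t k)
      rintro y ⟨i, hi, rfl⟩
      refine Subgroup.subset_closure (Or.inl ⟨i + 1, Nat.succ_le_succ (Nat.zero_le i),
        Nat.succ_le_succ hi, ?_⟩)
      rw [pow_succ']; group

lemma engel_conj_pow (g t : G) (m k : ℕ) :
    engel ((t ^ m)⁻¹ * g * t ^ m) t k = (t ^ m)⁻¹ * engel g t k * t ^ m := by
  have h := engel_conj g t (t ^ m) k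
  have ht : (t ^ m)⁻¹ * t * t ^ m = t := by
    rw [mul_assoc, ← pow_succ', pow_succ]
    group
  rw [ht] at h
  exact h.symm

end aux

/-- If `G = ⟨g, t⟩` and `[g,ₙt] = 1`, then the normal closure of `⟨g⟩` in `G` is generated
by the conjugates `g^(tⁱ)` for `i = 0, …, n-1`. -/
theorem normal_closure_generated_by_conjugates {G : Type*} [Group G] (n : ℕ) (hn : 1 ≤ n)
    (g t : G) (hgen : Subgroup.closure ({g, t} : Set G) = ⊤)
    (hE : engel g t n = 1) :
    Subgroup.normalClosure ({g} : Set G) =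
      Subgroup.closure {x : G | ∃ i : ℕ, i < n ∧ x = (t ^ i)⁻¹ * g * t ^ i} := by
  set S : Set G := {x : G | ∃ i : ℕ, i < n ∧ x = (t ^ i)⁻¹ * g * t ^ i} with hS
  set H := Subgroup.closure S with hH
  have hgH : g ∈ H := Subgroup.subset_closure ⟨0, hn, by simp⟩
  -- (t^n)⁻¹ g t^n ∈ H, via bottom extraction applied to a = (t^n)⁻¹ g t^n
  have hgn : (t ^ n)⁻¹ * g * t ^ n ∈ H := by
    set a := (t ^ n)⁻¹ * g * t ^ n with ha
    have hEa : engel a t n = 1 := by rw [ha, engel_conj_pow, hE]; group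
    have h := engel_bot t n a
    rw [hEa] at h
    refine (Subgroup.closure_le H).mpr ?_ h
    rintro x (⟨i, h1, h2, rfl⟩ | hx)
    · obtain ⟨j, hj⟩ : ∃ j, n = j + i := ⟨n - i, (Nat.sub_add_cancel h2).symm⟩
      have hjn : j < n := by omega
      have : t ^ i * a * (t ^ i)⁻¹ = (t ^ j)⁻¹ * g * t ^ j := by
        rw [ha, hj, pow_add]; group
      rw [this]
      exact Subgroup.subset_closure ⟨j, hjn, rfl⟩
    · rcases Set.mem_singleton_iff.mp hx with rfl
      exact one_mem H
  -- t g t⁻¹ ∈ H, via top extraction applied to a = (t^(n-1))⁻¹ g t^(n-1)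
  have hgm1 : t * g * t⁻¹ ∈ H := by
    obtain ⟨m, hm⟩ : ∃ m, n = m + 1 := ⟨n - 1, by omega⟩
    set a := (t ^ m)⁻¹ * g * t ^ m with ha
    have hEa : engel a t n = 1 := by rw [ha, engel_conj_pow, hE]; group
    have h := engel_top t n a
    rw [hEa] at h
    have h2 : t ^ n * a * (t ^ n)⁻¹ ∈ H := by
      refine (Subgroup.closure_le H).mpr ?_ h
      rintro x (⟨i, hi, rfl⟩ | hx)
      · rcases Nat.lt_or_ge i (m + 1) with hi' | hi'
        · obtain ⟨j, hj⟩ : ∃ j, m = j + i := ⟨m - i, by omega⟩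
          have : t ^ i * a * (t ^ i)⁻¹ = (t ^ j)⁻¹ * g * t ^ j := by
            rw [ha, hj, pow_add]; group
          rw [this]
          exact Subgroup.subset_closure ⟨j, by omega, rfl⟩
        · omega
      · rcases Set.mem_singleton_iff.mp hx with rfl
        exact one_mem H
    have heq : t ^ n * a * (t ^ n)⁻¹ = t * g * t⁻¹ := by
      rw [ha, hm, pow_succ']; group
    rwa [heq] at h2
  -- conjugation by t and t⁻¹ stabilizes H
  have conjT : ∀ h ∈ H, t * h * t⁻¹ ∈ H := by
    intro h hh
    induction hh using Subgroup.closure_induction with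
    | mem x hx =>
      rcases hx with ⟨i, hi, rfl⟩
      rcases i with _ | j
      · simpa using hgm1
      · have : t * ((t ^ (j + 1))⁻¹ * g * t ^ (j + 1)) * t⁻¹ = (t ^ j)⁻¹ * g * t ^ j := by
          rw [pow_succ']; group
        rw [this]
        exact Subgroup.subset_closure ⟨j, Nat.lt_of_succ_lt hi, rfl⟩
    | one => simpa using one_mem H
    | mul x y hx hy px py =>
      have : t * (x * y) * t⁻¹ = (t * x * t⁻¹) * (t * y * t⁻¹) := by group
      rw [this]; exact mul_mem px py
    | inv x hx px =>
      have : t * x⁻¹ * t⁻¹ = (t * x * t⁻¹)⁻¹ := by group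
      rw [this]; exact inv_mem px
  have conjT' : ∀ h ∈ H, t⁻¹ * h * t ∈ H := by
    intro h hh
    induction hh using Subgroup.closure_induction with
    | mem x hx =>
      rcases hx with ⟨i, hi, rfl⟩
      have : t⁻¹ * ((t ^ i)⁻¹ * g * t ^ i) * t = (t ^ (i + 1))⁻¹ * g * t ^ (i + 1) := by
        rw [pow_succ]; group
      rw [this]
      rcases Nat.lt_or_ge (i + 1) n with h' | h'
      · exact Subgroup.subset_closure ⟨i + 1, h', rfl⟩
      · have : i + 1 = n := le_antisymm hi h'
        rw [this]; exact hgn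
    | one => simpa using one_mem H
    | mul x y hx hy px py =>
      have : t⁻¹ * (x * y) * t = (t⁻¹ * x * t) * (t⁻¹ * y * t) := by group
      rw [this]; exact mul_mem px py
    | inv x hx px =>
      have : t⁻¹ * x⁻¹ * t = (t⁻¹ * x * t)⁻¹ := by group
      rw [this]; exact inv_mem px
  -- H is normal
  have hnorm : H.Normal := by
    rw [← Subgroup.normalizer_eq_top_iff]
    rw [eq_top_iff, ← hgen, Subgroup.closure_le]
    rintro x hx
    rcases hx with hx | hx
    · rw [hx]; exact Subgroup.le_normalizer hgH
    · rw [Set.mem_singleton_iff] at hx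
      rw [hx]
      show t ∈ Subgroup.normalizer (H : Set G)
      rw [Subgroup.mem_normalizer_iff]
      intro h
      constructor
      · exact fun hh => conjT h hh
      · intro hh
        have := conjT' _ hh
        have heq : t⁻¹ * (t * h * t⁻¹) * t = h := by group
        rwa [heq] at this
  apply le_antisymm
  · exact Subgroup.normalClosure_le_normal (by simpa using hgH)
  · rw [Subgroup.closure_le]
    rintro x ⟨i, hi, rfl⟩
    haveI := Subgroup.normalClosure_normal (s := ({g} : Set G))
    have hg' : g ∈ Subgroup.normalClosure ({g} : Set G) :=
      Subgroup.subset_normalClosure rfl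
    have := this.conj_mem g hg' (t ^ i)⁻¹
    simpa using this
end

section
/- Let G be a group and K a nilpotent normal subgroup such that G = K⟨t⟩ for some t ∈ G, where [g, n copies of t] = 1 for every element g of some generating set A of K. If in addition K is abelian, then G is nilpotent of class at most n + 1. -/
open scoped commutatorElement

/-- If `G = K⟨t⟩` with `K` an abelian normal subgroup generated by a set `A` of elements
satisfying `[a,ₙt] = 1`, then `G` is nilpotent of class at most `n + 1`. -/
theorem nilpotency_criterion_abelian {G : Type*} [Group G] (n : ℕ) (hn : 1 ≤ n)
    (K : Subgroup G) (hKnormal : K.Normal)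
    (hKab : ∀ a ∈ K, ∀ b ∈ K, a * b = b * a)
    (t : G) (hprod : ∀ g : G, ∃ k ∈ K, ∃ i : ℤ, g = k * t ^ i)
    (A : Set G) (hA : A ⊆ K) (hAgen : Subgroup.closure A = K)
    (hE : ∀ a ∈ A, engel a t n = 1) :
    (⊤ : Subgroup G).lowerCentralSeries (n + 2) = ⊥ := by
  classical
  set f : G → G := fun x => ⁅x, t⁆ with hf
  have hengel : ∀ (a : G) (j : ℕ), engel a t j = f^[j] a := by
    intro a j
    induction j with
    | zero => simp [engel]
    | succ j ih => rw [engel, ih, Function.iterate_succ_apply']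
  have hfK : ∀ x ∈ K, f x ∈ K := by
    intro x hx
    have h1 : t * x⁻¹ * t⁻¹ ∈ K := hKnormal.conj_mem _ (K.inv_mem hx) t
    have : x * (t * x⁻¹ * t⁻¹) ∈ K := K.mul_mem hx h1
    have heq : f x = x * (t * x⁻¹ * t⁻¹) := by
      simp only [hf, commutatorElement_def]; group
    rw [heq]; exact this
  -- F : K →* K, k ↦ ⁅k, t⁆
  let F : Monoid.End ↥K := MonoidHom.mk' (fun k => ⟨f ↑k, hfK _ k.2⟩) (by
    rintro ⟨x, hx⟩ ⟨y, hy⟩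
    apply Subtype.ext
    show f (x * y) = f x * f y
    have hu : f y ∈ K := hfK y hy
    have hv : t * x⁻¹ * t⁻¹ ∈ K := hKnormal.conj_mem _ (K.inv_mem hx) t
    have h1 : f (x * y) = x * (f y * (t * x⁻¹ * t⁻¹)) := by
      simp only [hf, commutatorElement_def]; group
    have h2 : f x * f y = x * ((t * x⁻¹ * t⁻¹) * f y) := by
      simp only [hf, commutatorElement_def]; group
    rw [h1, h2, hKab _ hu _ hv])
  have hFapp : ∀ k : ↥K, ((F k : ↥K) : G) = f ↑k := fun k => rfl
  have hFpow : ∀ (j : ℕ) (k : ↥K), (((F ^ j) k : ↥K) : G) = f^[j] ↑k := by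
    intro j
    induction j with
    | zero => intro k; simp
    | succ j ih =>
      intro k
      rw [pow_succ]
      show (((F ^ j) (F k) : ↥K) : G) = f^[j+1] ↑k
      rw [ih, Function.iterate_succ_apply, hFapp]
  set N : ℕ → Subgroup G := fun j => Subgroup.map K.subtype (F ^ j).range with hN
  have hmemN : ∀ (j : ℕ) (x : G), x ∈ N j ↔ ∃ k : ↥K, f^[j] ↑k = x := by
    intro j x
    constructor
    · rintro ⟨y, ⟨k, hk⟩, rfl⟩
      exact ⟨k, by rw [← hFpow, ← hk]; rfl⟩
    · rintro ⟨k, hk⟩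
      exact ⟨(F ^ j) k, ⟨k, rfl⟩, by rw [Subgroup.coe_subtype, hFpow, hk]⟩
  have hNK : ∀ (j : ℕ) (x : G), x ∈ N j → x ∈ K := by
    intro j x hx
    obtain ⟨k, hk⟩ := (hmemN j x).1 hx
    rw [← hk, ← hFpow]
    exact ((F ^ j) k).2
  have hfN : ∀ (j : ℕ) (x : G), x ∈ N j → f x ∈ N (j + 1) := by
    intro j x hx
    obtain ⟨k, hk⟩ := (hmemN j x).1 hx
    exact (hmemN _ _).2 ⟨k, by rw [Function.iterate_succ_apply', hk]⟩
  -- conjugation by t commutes with f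
  have hθf : ∀ (j : ℕ) (x : G), f^[j] (t * x * t⁻¹) = t * f^[j] x * t⁻¹ := by
    intro j
    induction j with
    | zero => intro x; simp
    | succ j ih =>
      intro x
      rw [Function.iterate_succ_apply', Function.iterate_succ_apply', ih]
      simp only [hf, commutatorElement_def]; group
  have hθ'f : ∀ (j : ℕ) (x : G), f^[j] (t⁻¹ * x * t) = t⁻¹ * f^[j] x * t := by
    intro j
    induction j with
    | zero => intro x; simp
    | succ j ih =>
      intro x
      rw [Function.iterate_succ_apply', Function.iterate_succ_apply', ih]
      simp only [hf, commutatorElement_def]; group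
  have hθN : ∀ (j : ℕ) (x : G), x ∈ N j → t * x * t⁻¹ ∈ N j := by
    intro j x hx
    obtain ⟨k, hk⟩ := (hmemN j x).1 hx
    refine (hmemN j _).2 ⟨⟨t * ↑k * t⁻¹, hKnormal.conj_mem _ k.2 t⟩, ?_⟩
    show f^[j] (t * ↑k * t⁻¹) = t * x * t⁻¹
    rw [hθf, hk]
  have hθ'N : ∀ (j : ℕ) (x : G), x ∈ N j → t⁻¹ * x * t ∈ N j := by
    intro j x hx
    obtain ⟨k, hk⟩ := (hmemN j x).1 hx
    have hm : t⁻¹ * ↑k * t ∈ K := by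
      have := hKnormal.conj_mem _ k.2 t⁻¹
      simpa using this
    refine (hmemN j _).2 ⟨⟨t⁻¹ * ↑k * t, hm⟩, ?_⟩
    show f^[j] (t⁻¹ * ↑k * t) = t⁻¹ * x * t
    rw [hθ'f, hk]
  have hconjN : ∀ (i : ℤ) (j : ℕ) (x : G), x ∈ N j → t ^ i * x * t ^ (-i) ∈ N j := by
    intro i
    induction i using Int.induction_on with
    | zero => intro j x hx; simpa using hx
    | succ i ih =>
      intro j x hx
      have h1 : t ^ ((i : ℤ) + 1) * x * t ^ (-((i : ℤ) + 1)) =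
          t * (t ^ (i : ℤ) * x * t ^ (-(i : ℤ))) * t⁻¹ := by group
      rw [h1]
      exact hθN j _ (ih j x hx)
    | pred i ih =>
      intro j x hx
      have h1 : t ^ (-(i : ℤ) - 1) * x * t ^ (-(-(i : ℤ) - 1)) =
          t⁻¹ * (t ^ (-(i : ℤ)) * x * t ^ (-(-(i : ℤ)))) * t := by group
      rw [h1]
      exact hθ'N j _ (ih j x hx)
  -- commutators with powers of t
  have hA1 : ∀ (j : ℕ) (x : G), x ∈ N j → ∀ i : ℤ, ⁅x, t ^ i⁆ ∈ N (j + 1) := by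
    intro j x hx i
    induction i using Int.induction_on with
    | zero =>
      simp only [zpow_zero, commutatorElement_one_right]
      exact (N (j + 1)).one_mem
    | succ i ih =>
      have h1 : ⁅x, t ^ ((i : ℤ) + 1)⁆ =
          ⁅x, t ^ (i : ℤ)⁆ * (t ^ (i : ℤ) * f x * t ^ (-(i : ℤ))) := by
        simp only [hf, commutatorElement_def]; group
      rw [h1]
      exact (N (j + 1)).mul_mem ih (hconjN i _ _ (hfN j x hx))
    | pred i ih =>
      have h1 : ⁅x, t ^ (-(i : ℤ) - 1)⁆ =
          ⁅x, t ^ (-(i : ℤ))⁆ * (t ^ (-(i : ℤ)) * (t⁻¹ * (f x)⁻¹ * t) * t ^ (-(-(i : ℤ)))) := by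
        simp only [hf, commutatorElement_def]; group
      rw [h1]
      exact (N (j + 1)).mul_mem ih
        (hconjN (-(i : ℤ)) _ _ (hθ'N _ _ ((N (j + 1)).inv_mem (hfN j x hx))))
  -- commutators with arbitrary elements
  have hB : ∀ (j : ℕ) (x : G), x ∈ N j → ∀ g : G, ⁅x, g⁆ ∈ N (j + 1) := by
    intro j x hx g
    obtain ⟨k, hk, i, rfl⟩ := hprod g
    have h1 : ⁅x, k * t ^ i⁆ = ⁅x, k⁆ * (k * ⁅x, t ^ i⁆ * k⁻¹) := by
      simp only [commutatorElement_def]; group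
    have hxk : ⁅x, k⁆ = 1 :=
      commutatorElement_eq_one_iff_mul_comm.2 (hKab x (hNK j x hx) k hk)
    have hy := hA1 j x hx i
    have h2 : k * ⁅x, t ^ i⁆ * k⁻¹ = ⁅x, t ^ i⁆ := by
      rw [hKab k hk _ (hNK _ _ hy)]
      exact mul_inv_cancel_right _ _
    rw [h1, hxk, one_mul, h2]
    exact hy
  have hN0 : ∀ x ∈ K, x ∈ N 0 := by
    intro x hx
    exact (hmemN 0 x).2 ⟨⟨x, hx⟩, rfl⟩
  -- all basic commutators lie in N 1
  have hBase : ∀ g h : G, ⁅g, h⁆ ∈ N 1 := by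
    intro g h
    obtain ⟨k, hk, i, rfl⟩ := hprod g
    have h1 : ⁅k * t ^ i, h⁆ = (k * ⁅t ^ i, h⁆ * k⁻¹) * ⁅k, h⁆ := by
      simp only [commutatorElement_def]; group
    have hkh : ⁅k, h⁆ ∈ N 1 := hB 0 k (hN0 k hk) h
    have hth : ⁅t ^ i, h⁆ ∈ N 1 := by
      obtain ⟨l, hl, m, rfl⟩ := hprod h
      have h2 : ⁅t ^ i, l * t ^ m⁆ = ⁅l, t ^ i⁆⁻¹ := by
        simp only [commutatorElement_def]; group
      rw [h2]
      exact (N 1).inv_mem (hA1 0 l (hN0 l hl) i)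
    have h3 : k * ⁅t ^ i, h⁆ * k⁻¹ = ⁅t ^ i, h⁆ := by
      rw [hKab k hk _ (hNK _ _ hth)]
      exact mul_inv_cancel_right _ _
    rw [h1, h3]
    exact (N 1).mul_mem hth hkh
  -- lower central series bound
  have hLCS : ∀ j : ℕ, (⊤ : Subgroup G).lowerCentralSeries (j + 1) ≤ N (j + 1) := by
    intro j
    induction j with
    | zero =>
      rw [Subgroup.lowerCentralSeries_succ, Subgroup.commutator_def, Subgroup.closure_le]
      rintro x ⟨p, _, q, _, rfl⟩
      exact hBase p q
    | succ j ih =>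
      rw [Subgroup.lowerCentralSeries_succ, Subgroup.commutator_def, Subgroup.closure_le]
      rintro x ⟨p, hp, q, _, rfl⟩
      have : ⁅p, q⁆ ∈ N (j + 2) := hB (j + 1) p (ih hp) q
      simpa [commutatorElement_def] using this
  -- f^[n] kills K
  have hker : ∀ a ∈ K, f^[n] a = 1 := by
    have hsub : K ≤ Subgroup.map K.subtype (MonoidHom.ker (F ^ n)) := by
      have hsub' : Subgroup.closure A ≤ Subgroup.map K.subtype (MonoidHom.ker (F ^ n)) := by
        rw [Subgroup.closure_le]
        intro a ha
        have haK : a ∈ K := hA ha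
        refine ⟨⟨a, haK⟩, ?_, rfl⟩
        have h1 : (((F ^ n) ⟨a, haK⟩ : ↥K) : G) = 1 := by
          rw [hFpow]
          show f^[n] a = 1
          rw [← hengel]
          exact hE a ha
        exact MonoidHom.mem_ker.2 (Subtype.ext (h1.trans K.coe_one.symm))
      rw [hAgen] at hsub'
      exact hsub'
    intro a ha
    obtain ⟨k, hk, rfl⟩ := hsub ha
    have hk1 : (F ^ n) k = 1 := hk
    show f^[n] (↑k) = 1
    rw [← hFpow, hk1]
    simp
  have hNn : N n = ⊥ := by
    rw [eq_bot_iff]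
    intro x hx
    obtain ⟨k, hk⟩ := (hmemN n x).1 hx
    rw [Subgroup.mem_bot, ← hk]
    exact hker ↑k k.2
  obtain ⟨m, rfl⟩ : ∃ m, n = m + 1 := ⟨n - 1, (Nat.succ_pred_eq_of_pos hn).symm⟩
  have h1 : (⊤ : Subgroup G).lowerCentralSeries (m + 1) = ⊥ :=
    le_bot_iff.1 (le_trans (hLCS m) (le_of_eq hNn))
  rw [eq_bot_iff, ← h1]
  exact Subgroup.lowerCentralSeries_antitone ⊤ (by omega)
end

section
/- Let G be a group in which the word v = [x, n copies of y] (the n-th Engel word) takes only finitely many values, say at most m. Then the commutator subgroup v(G)' of the verbal subgroup v(G) generated by all these values is finite. -/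
open scoped commutatorElement

lemma map_engel {G : Type*} [Group G] (f : G →* G) (x y : G) (k : ℕ) :
    f (engel x y k) = engel (f x) (f y) k := by
  induction k with
  | zero => rfl
  | succ k ih => simp [engel, map_commutatorElement, ih]

/-- Commutator is unchanged by multiplying the first argument by a central element. -/
lemma commutator_mul_central_left {H : Type*} [Group H] (c z b : H)
    (hz : ∀ g, z * g = g * z) : ⁅c * z, b⁆ = ⁅c, b⁆ := by
  simp only [commutatorElement_def, mul_inv_rev]
  rw [mul_assoc c z b, hz b]
  group

lemma commutator_mul_central_right {H : Type*} [Group H] (c z b : H)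
    (hz : ∀ g, z * g = g * z) : ⁅b, c * z⁆ = ⁅b, c⁆ := by
  calc ⁅b, c * z⁆ = ⁅c * z, b⁆⁻¹ := (commutatorElement_inv _ _).symm
  _ = ⁅c, b⁆⁻¹ := by rw [commutator_mul_central_left c z b hz]
  _ = ⁅b, c⁆ := commutatorElement_inv _ _

/-- Easy half of Schur's theorem: finite index center implies finitely many commutators. -/
lemma finite_commutatorSet_of_finiteIndex_center {H : Type*} [Group H]
    [Subgroup.FiniteIndex (Subgroup.center H)] : Finite (commutatorSet H) := by
  set Z := Subgroup.center H
  have hsub : commutatorSet H ⊆ Set.range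
      (fun p : (H ⧸ Z) × (H ⧸ Z) => ⁅Quotient.out p.1, Quotient.out p.2⁆) := by
    rintro - ⟨a, b, rfl⟩
    refine ⟨(QuotientGroup.mk a, QuotientGroup.mk b), ?_⟩
    have ha : (QuotientGroup.mk a : H ⧸ Z).out⁻¹ * a ∈ Z := by
      rw [← QuotientGroup.eq, QuotientGroup.out_eq']
    have hb : (QuotientGroup.mk b : H ⧸ Z).out⁻¹ * b ∈ Z := by
      rw [← QuotientGroup.eq, QuotientGroup.out_eq']
    have ea : a = (QuotientGroup.mk a : H ⧸ Z).out * ((QuotientGroup.mk a : H ⧸ Z).out⁻¹ * a) := by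
      group
    have eb : b = (QuotientGroup.mk b : H ⧸ Z).out * ((QuotientGroup.mk b : H ⧸ Z).out⁻¹ * b) := by
      group
    conv_rhs => rw [ea, eb]
    rw [commutator_mul_central_left _ _ _ (fun g => (Subgroup.mem_center_iff.mp ha g).symm),
      commutator_mul_central_right _ _ _ (fun g => (Subgroup.mem_center_iff.mp hb g).symm)]
  have : Finite (H ⧸ Z) := Subgroup.finite_quotient_of_finiteIndex (H := Z)
  exact Set.Finite.subset (Set.finite_range _) hsub

/-- If the `n`-th Engel word has finitely many values in `G` (at most `m`), then the
derived subgroup of the corresponding verbal subgroup is finite. -/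
theorem engel_verbal_derived_finite {G : Type*} [Group G] (n m : ℕ) (hn : 1 ≤ n)
    (hfin : {z : G | ∃ x y : G, z = engel x y n}.Finite)
    (hm : {z : G | ∃ x y : G, z = engel x y n}.ncard ≤ m) :
    Finite ↥(⁅Subgroup.closure {z : G | ∃ x y : G, z = engel x y n},
        Subgroup.closure {z : G | ∃ x y : G, z = engel x y n}⁆ : Subgroup G) := by
  classical
  set S : Set G := {z : G | ∃ x y : G, z = engel x y n} with hS
  -- S is closed under conjugation
  have hconj : ∀ g : G, ∀ s ∈ S, g * s * g⁻¹ ∈ S := by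
    rintro g - ⟨x, y, rfl⟩
    refine ⟨g * x * g⁻¹, g * y * g⁻¹, ?_⟩
    have := map_engel (MulAut.conj g).toMonoidHom x y n
    simpa using this
  haveI : Finite S := hfin.to_subtype
  -- the conjugation action of G on S as a homomorphism to Perm S
  let σ : G →* Equiv.Perm S :=
    { toFun := fun g =>
        { toFun := fun s => ⟨g * s * g⁻¹, hconj g s s.2⟩
          invFun := fun s => ⟨g⁻¹ * s * g, by simpa using hconj g⁻¹ s s.2⟩
          left_inv := fun s => by ext; simp [mul_assoc]
          right_inv := fun s => by ext; simp [mul_assoc] }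
      map_one' := by ext s; simp
      map_mul' := fun g h => by ext s; simp [mul_assoc] }
  haveI : Finite σ.range := Subtype.finite
  haveI hker : σ.ker.FiniteIndex := Subgroup.finiteIndex_ker σ
  -- the centralizer of S has finite index
  have hker_le : σ.ker ≤ Subgroup.centralizer S := by
    intro g hg s hs
    have : σ g = 1 := hg
    have h2 := congrArg (fun e : Equiv.Perm S => (e ⟨s, hs⟩ : G)) this
    simp only [σ, Equiv.Perm.coe_one, id_eq, MonoidHom.coe_mk, OneHom.coe_mk,
      Equiv.coe_fn_mk] at h2
    calc s * g = g * (g⁻¹ * s * g) := by group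
    _ = g * (g⁻¹ * (g * s * g⁻¹) * g) := by rw [h2]
    _ = g * s := by group
  haveI hC : (Subgroup.centralizer S).FiniteIndex :=
    Subgroup.finiteIndex_of_le hker_le
  set Hs : Subgroup G := Subgroup.closure S with hHs
  -- the centralizer of S intersected with Hs is central in Hs
  have hcent : (Subgroup.centralizer S).subgroupOf Hs ≤ Subgroup.center Hs := by
    rintro ⟨g, hgH⟩ hg
    rw [Subgroup.mem_center_iff]
    rintro ⟨x, hxH⟩
    have hgc : g ∈ Subgroup.centralizer S := hg
    have : ∀ x ∈ Hs, x * g = g * x := by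
      intro x hx
      induction hx using Subgroup.closure_induction with
      | mem s hs => exact hgc s hs
      | one => simp
      | mul a b _ _ ha hb => rw [mul_assoc, hb, ← mul_assoc, ha, mul_assoc]
      | inv a _ ha =>
          have := congrArg (fun t => a⁻¹ * t * a⁻¹) ha
          simpa [mul_assoc] using this.symm
    exact Subtype.ext (this x hxH)
  haveI : ((Subgroup.centralizer S).subgroupOf Hs).FiniteIndex := by
    constructor
    have h1 : (Subgroup.centralizer S).relIndex Hs ≠ 0 := by
      intro h0
      exact hC.index_ne_zero (Subgroup.index_eq_zero_of_relIndex_eq_zero h0)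
    exact h1
  haveI : (Subgroup.center Hs).FiniteIndex := Subgroup.finiteIndex_of_le hcent
  haveI : Finite (commutatorSet Hs) := finite_commutatorSet_of_finiteIndex_center
  haveI hfinc : Finite (_root_.commutator Hs) := inferInstance
  have hmap : (⁅Hs, Hs⁆ : Subgroup G) = (_root_.commutator Hs).map Hs.subtype := by
    rw [_root_.commutator, Subgroup.map_commutator]
    congr 1 <;> simp [Subgroup.range_subtype, ← MonoidHom.range_eq_map]
  rw [hmap]
  have : ((_root_.commutator ↥Hs).map Hs.subtype : Set G) =
      Hs.subtype '' (_root_.commutator ↥Hs) := rfl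
  have hfin2 : ((_root_.commutator ↥Hs).map Hs.subtype : Set G).Finite := by
    rw [this]
    exact Set.Finite.image _ (Set.toFinite _)
  exact hfin2.to_subtype
end

section
/- Let A be an abelian normal subgroup of a group G and t ∈ G such that the conjugation action of t on A satisfies [A, s copies of t] = 1 and t induces on A an automorphism of finite order e. Then the subgroup [A, t] = ⟨[a,t] : a ∈ A⟩ has exponent dividing e^(s-1). -/
open scoped commutatorElement

/-- If `A` is an abelian normal subgroup of `G`, `t ∈ G` with `[A,ₛt] = 1` and the
conjugation action of `t` on `A` has order dividing `e`, then `[A,t]` has exponent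
dividing `e^(s-1)`: `⁅a,t⁆^(e^(s-1)) = 1` for all `a ∈ A`. -/
theorem commutator_exponent_bound {G : Type*} [Group G] (A : Subgroup G) (hA : A.Normal)
    (hab : ∀ a ∈ A, ∀ b ∈ A, a * b = b * a) (t : G) (s e : ℕ) (hs : 1 ≤ s) (he : 1 ≤ e)
    (hE : ∀ a ∈ A, engel a t s = 1)
    (horder : ∀ a ∈ A, (t ^ e)⁻¹ * a * t ^ e = a) :
    ∀ a ∈ A, ⁅a, t⁆ ^ e ^ (s - 1) = 1 := by
  letI : CommGroup ↥A :=
    { (inferInstance : Group ↥A) with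
      mul_comm := fun x y => Subtype.ext (hab x x.2 y y.2) }
  let M := Additive ↥A
  let φ : M → G := fun m => ((Additive.toMul m : ↥A) : G)
  have φ_mem : ∀ m : M, φ m ∈ A := fun m => (Additive.toMul m).2
  have φ_add : ∀ x y : M, φ (x + y) = φ x * φ y := fun x y => rfl
  have φ_zero : φ 0 = 1 := rfl
  have φ_inj : ∀ m : M, φ m = 1 → m = 0 := by
    intro m hm
    exact Additive.toMul.injective (Subtype.ext hm)
  have φ_nsmul : ∀ (n : ℕ) (m : M), φ (n • m) = φ m ^ n := by
    intro n m
    induction n with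
    | zero => simp [φ_zero]
    | succ k ih => rw [succ_nsmul, φ_add, ih, pow_succ]
  let u : AddMonoid.End M := AddMonoidHom.mk'
    (fun m => Additive.ofMul (⟨t * φ m * t⁻¹, hA.conj_mem _ (φ_mem m) t⟩ : ↥A))
    (by
      intro x y
      apply Additive.toMul.injective
      apply Subtype.ext
      show t * φ (x + y) * t⁻¹ = (t * φ x * t⁻¹) * (t * φ y * t⁻¹)
      rw [φ_add]; group)
  have φ_u : ∀ m : M, φ (u m) = t * φ m * t⁻¹ := fun m => rfl
  let d : AddMonoid.End M := 1 - u
  have mul_apply : ∀ (f g : AddMonoid.End M) (x : M), (f * g) x = f (g x) := fun _ _ _ => rfl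
  have φ_d : ∀ m : M, φ (d m) = ⁅φ m, t⁆ := by
    intro m
    have h1 : d m = m + (-(u m)) := by
      show (1 - u) m = m + (-(u m))
      rw [show (1 - u) m = (1 : AddMonoid.End M) m - u m from rfl, sub_eq_add_neg]
      rfl
    have h2 : φ (-(u m)) = (φ (u m))⁻¹ := rfl
    rw [h1, φ_add, h2, φ_u, commutatorElement_def]
    group
  have φ_dpow : ∀ (n : ℕ) (m : M), φ ((d ^ n) m) = engel (φ m) t n := by
    intro n
    induction n with
    | zero => intro m; simp [engel]
    | succ k ih =>
      intro m
      rw [pow_succ', mul_apply, φ_d, ih]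
      rfl
  -- u^e = 1
  have φ_upow : ∀ (n : ℕ) (m : M), φ ((u ^ n) m) = t ^ n * φ m * (t ^ n)⁻¹ := by
    intro n
    induction n with
    | zero => intro m; simp
    | succ k ih =>
      intro m
      rw [pow_succ', mul_apply, φ_u, ih]
      group
  have hue : u ^ e = 1 := by
    apply AddMonoidHom.ext
    intro m
    apply Additive.toMul.injective
    apply Subtype.ext
    show φ ((u ^ e) m) = φ m
    rw [φ_upow]
    have := horder (φ m) (φ_mem m)
    have h : φ m * t ^ e = t ^ e * φ m := by
      have := horder (φ m) (φ_mem m)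
      calc φ m * t ^ e = t ^ e * ((t ^ e)⁻¹ * φ m * t ^ e) := by group
        _ = t ^ e * φ m := by rw [this]
    rw [mul_inv_eq_iff_eq_mul]
    exact h.symm
  -- main induction
  have key : ∀ (n : ℕ) (m : M), (d ^ (n + 1)) m = 0 → (e ^ n) • (d m) = 0 := by
    intro n
    induction n with
    | zero =>
      intro m hm
      rw [pow_zero, one_smul]
      rw [pow_one] at hm
      exact hm
    | succ n ih =>
      intro m hm
      -- d^(n+2) m = 0 means d^(n+1) (d m) = 0
      have hdm : (d ^ (n + 1)) (d m) = 0 := by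
        rw [← mul_apply (d ^ (n + 1)) d m, ← pow_succ]
        exact hm
      have ih2 : (e ^ n) • (d (d m)) = 0 := ih (d m) hdm
      -- terms with k ≥ 2 die
      have hk2 : ∀ j : ℕ, (e ^ n) • (((-d) ^ (j + 2)) m) = 0 := by
        intro j
        have h1 : ((-d) ^ (j + 2)) m = ((-d) ^ j) (d (d m)) := by
          have : (-d) ^ (j + 2) = (-d) ^ j * (d * d) := by
            rw [pow_add]
            congr 1
            rw [pow_two]
            exact neg_mul_neg d d
          rw [this, mul_apply, mul_apply]
        rw [h1, ← map_nsmul, ih2, map_zero]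
      -- binomial expansion of 1 = u^e = (-d + 1)^e
      have hbin : (1 : AddMonoid.End M) =
          ∑ k ∈ Finset.range (e + 1), (-d) ^ k * ((e.choose k : ℕ) : AddMonoid.End M) := by
        have hc : Commute (-d) (1 : AddMonoid.End M) := Commute.one_right _
        have : u = -d + 1 := by simp [d]
        calc (1 : AddMonoid.End M) = u ^ e := hue.symm
          _ = (-d + 1) ^ e := by rw [this]
          _ = ∑ k ∈ Finset.range (e + 1), (-d) ^ k * 1 ^ (e - k) * ((e.choose k : ℕ) : AddMonoid.End M) :=
              hc.add_pow e
          _ = ∑ k ∈ Finset.range (e + 1), (-d) ^ k * ((e.choose k : ℕ) : AddMonoid.End M) := by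
              simp
      have hm2 : m = ∑ k ∈ Finset.range (e + 1), (e.choose k) • (((-d) ^ k) m) := by
        conv_lhs => rw [show m = (1 : AddMonoid.End M) m from rfl, hbin]
        rw [show (∑ k ∈ Finset.range (e + 1), (-d) ^ k * ((e.choose k : ℕ) : AddMonoid.End M)) m = ∑ k ∈ Finset.range (e + 1), ((-d) ^ k * ((e.choose k : ℕ) : AddMonoid.End M)) m from AddMonoidHom.finset_sum_apply _ _ _]
        apply Finset.sum_congr rfl
        intro k _
        rw [mul_apply, show ((e.choose k : ℕ) : AddMonoid.End M) m = e.choose k • m from rfl,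
          map_nsmul]
      -- peel off k = 0 and k = 1
      obtain ⟨E, rfl⟩ : ∃ E, e = E + 1 := ⟨e - 1, (Nat.succ_pred_eq_of_pos he).symm⟩
      rw [Finset.sum_range_succ', Finset.sum_range_succ'] at hm2
      -- hm2 : m = (∑ j < E, choose (j+2) • ((-d)^(j+2) m) + choose 1 • ((-d)^1 m)) + choose 0 • ((-d)^0 m)
      have h0 : ((E+1).choose 0) • (((-d) ^ 0) m) = m := by simp
      rw [h0] at hm2
      have hS : (∑ j ∈ Finset.range E, ((E+1).choose (j + 1 + 1)) • (((-d) ^ (j + 1 + 1)) m))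
          + ((E+1).choose (0 + 1)) • (((-d) ^ (0 + 1)) m) = 0 :=
        add_eq_right.mp hm2.symm
      have hfinal : ((E+1) ^ n) • (((∑ j ∈ Finset.range E,
          ((E+1).choose (j + 1 + 1)) • (((-d) ^ (j + 1 + 1)) m))
          + ((E+1).choose (0 + 1)) • (((-d) ^ (0 + 1)) m)) : M) = 0 := by
        rw [hS, smul_zero]
      rw [smul_add, Finset.smul_sum] at hfinal
      have hz : ∀ j ∈ Finset.range E,
          ((E+1) ^ n) • (((E+1).choose (j + 1 + 1)) • (((-d) ^ (j + 1 + 1)) m)) = 0 := by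
        intro j _
        rw [smul_comm, hk2 j, smul_zero]
      rw [Finset.sum_eq_zero hz, zero_add] at hfinal
      -- hfinal : e^n • (choose (E+1) 1 • ((-d)^1 m)) = 0
      have hneg : ((-d) ^ (0 + 1)) m = -(d m) := by
        rw [pow_one]
        rfl
      rw [hneg, Nat.choose_one_right] at hfinal
      simp only [smul_neg, neg_eq_zero, smul_smul] at hfinal
      rw [pow_succ]
      exact hfinal
  -- final assembly
  intro a ha
  obtain ⟨n, rfl⟩ : ∃ n, s = n + 1 := ⟨s - 1, (Nat.succ_pred_eq_of_pos hs).symm⟩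
  set m : M := Additive.ofMul (⟨a, ha⟩ : ↥A) with hm
  have hφm : φ m = a := rfl
  have h1 : (d ^ (n + 1)) m = 0 := by
    apply φ_inj
    rw [φ_dpow, hφm]
    exact hE a ha
  have h2 := key n m h1
  have h3 : φ ((e ^ n) • (d m)) = ⁅a, t⁆ ^ e ^ n := by
    rw [φ_nsmul, φ_d, hφm]
  rw [h2, φ_zero] at h3
  simpa using h3.symm
end

section
/- If H is a group whose center has finite index and whose derived subgroup is torsion-free, then H is abelian. -/
open scoped commutatorElement

lemma commutator_eq_of_central_left {H : Type*} [Group H] (g h z : H)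
    (hz : z ∈ Subgroup.center H) : ⁅g * z, h⁆ = ⁅g, h⁆ := by
  have hz' : z * h * z⁻¹ = h := by
    rw [Subgroup.mem_center_iff] at hz
    rw [← hz h]
    group
  calc ⁅g * z, h⁆ = g * (z * h * z⁻¹) * g⁻¹ * h⁻¹ := by group
    _ = g * h * g⁻¹ * h⁻¹ := by rw [hz']
    _ = ⁅g, h⁆ := by group

lemma commutator_eq_of_central_right {H : Type*} [Group H] (g h z : H)
    (hz : z ∈ Subgroup.center H) : ⁅g, h * z⁆ = ⁅g, h⁆ := by
  have hz' : z * g⁻¹ * z⁻¹ = g⁻¹ := by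
    rw [Subgroup.mem_center_iff] at hz
    rw [← hz g⁻¹]
    group
  calc ⁅g, h * z⁆ = g * h * (z * g⁻¹ * z⁻¹) * h⁻¹ * g⁻¹ * g := by group
    _ = g * h * g⁻¹ * h⁻¹ * g⁻¹ * g := by rw [hz']
    _ = ⁅g, h⁆ := by group

lemma finite_commutatorSet_of_center_finiteIndex {H : Type*} [Group H]
    (hfi : (Subgroup.center H).FiniteIndex) : Finite (commutatorSet H) := by
  haveI := hfi
  haveI : Finite (H ⧸ Subgroup.center H) := Subgroup.finite_quotient_of_finiteIndex
  rw [Set.finite_coe_iff]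
  let f : (H ⧸ Subgroup.center H) × (H ⧸ Subgroup.center H) → H := fun p =>
    ⁅Quotient.out p.1, Quotient.out p.2⁆
  apply Set.Finite.subset (Set.finite_range f)
  rintro x ⟨a, b, rfl⟩
  refine ⟨((a : H ⧸ Subgroup.center H), (b : H ⧸ Subgroup.center H)), ?_⟩
  set a' := Quotient.out ((a : H ⧸ Subgroup.center H)) with ha'
  set b' := Quotient.out ((b : H ⧸ Subgroup.center H)) with hb'
  have haz : a'⁻¹ * a ∈ Subgroup.center H := by
    rw [← QuotientGroup.eq]
    exact QuotientGroup.out_eq' _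
  have hbz : b'⁻¹ * b ∈ Subgroup.center H := by
    rw [← QuotientGroup.eq]
    exact QuotientGroup.out_eq' _
  have ha : a = a' * (a'⁻¹ * a) := by group
  have hb : b = b' * (b'⁻¹ * b) := by group
  show ⁅a', b'⁆ = ⁅a, b⁆
  conv_rhs => rw [ha, hb]
  rw [commutator_eq_of_central_left _ _ _ haz, commutator_eq_of_central_right _ _ _ hbz]

/-- A group whose center has finite index and whose derived subgroup is torsion-free is
abelian (via Schur's theorem). -/
theorem center_finite_index_torsionfree_derived_abelian {H : Type*} [Group H]
    (hfi : (Subgroup.center H).FiniteIndex)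
    (htf : ∀ g : H, g ∈ commutator H → g ≠ 1 → ¬ IsOfFinOrder g) :
    ∀ a b : H, a * b = b * a := by
  haveI : Finite (commutatorSet H) := finite_commutatorSet_of_center_finiteIndex hfi
  haveI : Finite (commutator H) := inferInstance
  intro a b
  have hc : ⁅a, b⁆ ∈ commutator H :=
    Subgroup.commutator_mem_commutator (Subgroup.mem_top a) (Subgroup.mem_top b)
  by_contra hab
  have hne : ⁅a, b⁆ ≠ 1 := fun h => hab (commutatorElement_eq_one_iff_mul_comm.mp h)
  have hfin : IsOfFinOrder (⟨⁅a, b⁆, hc⟩ : commutator H) := isOfFinOrder_of_finite _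
  exact htf _ hc hne (Submonoid.isOfFinOrder_coe.mpr hfin)
end

section
/- Let G be a group and N an abelian normal subgroup such that [N, n copies of t] = 1 for all t ∈ G and every element of G induces on N an automorphism of order dividing r. If the subgroup of N generated by all elements of order dividing r^(n-1) is trivial, then N is contained in the center of G. -/
open scoped commutatorElement

private lemma engel_comm_shift {G : Type*} [Group G] (a b : G) (k : ℕ) :
    engel (⁅a, b⁆) b k = engel a b (k + 1) := by
  induction k with
  | zero => rfl
  | succ k ih => show ⁅engel (⁅a, b⁆) b k, b⁆ = _; rw [ih]; rfl

/-- If `N` is an abelian normal subgroup of `G` with `[N,ₙt] = 1` for all `t ∈ G`, every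
element of `G` induces on `N` an automorphism of order dividing `r`, and `N` has no
nontrivial elements of order dividing `r^(n-1)`, then `N` is central in `G`. -/
theorem central_criterion {G : Type*} [Group G] (N : Subgroup G) (hN : N.Normal)
    (hab : ∀ a ∈ N, ∀ b ∈ N, a * b = b * a) (n r : ℕ) (hn : 1 ≤ n) (hr : 1 ≤ r)
    (hE : ∀ t : G, ∀ a ∈ N, engel a t n = 1)
    (horder : ∀ t : G, ∀ a ∈ N, (t ^ r)⁻¹ * a * t ^ r = a)
    (htriv : ∀ a ∈ N, a ^ r ^ (n - 1) = 1 → a = 1) :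
    N ≤ Subgroup.center G := by
  intro a ha
  rw [Subgroup.mem_center_iff]
  intro t
  letI : CommGroup ↥N := { (inferInstance : Group ↥N) with
    mul_comm := fun x y => Subtype.ext (hab x x.2 y y.2) }
  let c : ↥N →* ↥N :=
  { toFun := fun x => ⟨t * (x : G) * t⁻¹, hN.conj_mem _ x.2 t⟩
    map_one' := by ext; simp
    map_mul' := fun x y => by ext; simp only [Subgroup.coe_mul]; group }
  let φ : AddMonoid.End (Additive ↥N) := MonoidHom.toAdditive c
  have hφval : ∀ x : ↥N, φ (Additive.ofMul x) = Additive.ofMul (c x) := fun x => rfl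
  have hφpow : ∀ (k : ℕ) (x : ↥N),
      ((Additive.toMul ((φ ^ k) (Additive.ofMul x)) : ↥N) : G) = t ^ k * x * (t ^ k)⁻¹ := by
    intro k
    induction k with
    | zero => intro x; simp
    | succ k ih =>
      intro x
      rw [pow_succ]
      show ((Additive.toMul ((φ ^ k) (φ (Additive.ofMul x))) : ↥N) : G) = _
      rw [hφval, ih]
      show t ^ k * (t * (x:G) * t⁻¹) * (t ^ k)⁻¹ = _
      group
  have hφr : φ ^ r = 1 := by
    refine AddMonoid.End.ext _ fun x => ?_
    rw [AddMonoid.End.one_apply]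
    refine Additive.toMul.injective (Subtype.ext ?_)
    have h1 := hφpow r (Additive.toMul x)
    simp only [ofMul_toMul] at h1
    rw [h1]
    have h2 := horder t _ (Additive.toMul x).2
    have h3 := congrArg (fun g => t ^ r * g * (t ^ r)⁻¹) h2
    rw [← h3]
    group
  have hsub : ∀ (f g : AddMonoid.End (Additive ↥N)) (y : Additive ↥N), (f - g) y = f y - g y :=
    fun _ _ _ => rfl
  have hnsm : ∀ (k : ℕ) (f : AddMonoid.End (Additive ↥N)) (y : Additive ↥N), (k • f) y = k • f y :=
    fun _ _ _ => rfl
  let F : AddMonoid.End (Additive ↥N) := 1 - φ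
  have hFval : ∀ x : ↥N, ((Additive.toMul (F (Additive.ofMul x)) : ↥N) : G)
      = ⁅(x : G), t⁆ := by
    intro x
    show ((Additive.toMul ((1 - φ) (Additive.ofMul x)) : ↥N) : G) = _
    rw [hsub, AddMonoid.End.one_apply, hφval, toMul_sub,
      toMul_ofMul, toMul_ofMul, commutatorElement_def]
    push_cast
    show (x : G) / (t * (x:G) * t⁻¹) = _
    simp only [div_eq_mul_inv, mul_inv_rev, inv_inv, mul_assoc]
  have hFpow : ∀ (k : ℕ) (x : ↥N),
      ((Additive.toMul ((F ^ k) (Additive.ofMul x)) : ↥N) : G) = engel (x : G) t k := by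
    intro k
    induction k with
    | zero => intro x; simp [engel]
    | succ k ih =>
      intro x
      rw [pow_succ]
      show ((Additive.toMul ((F ^ k) (F (Additive.ofMul x))) : ↥N) : G) = _
      have : F (Additive.ofMul x) = Additive.ofMul (Additive.toMul (F (Additive.ofMul x))) := rfl
      rw [this, ih, hFval, engel_comm_shift]
  have hFn : F ^ n = 0 := by
    refine AddMonoid.End.ext _ fun x => ?_
    rw [AddMonoid.End.zero_apply]
    refine Additive.toMul.injective (Subtype.ext ?_)
    have h1 := hFpow n (Additive.toMul x)
    simp only [ofMul_toMul] at h1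
    rw [h1, hE t _ (Additive.toMul x).2]
    simp
  -- ring computation
  set W : AddMonoid.End (Additive ↥N) :=
    ∑ i ∈ Finset.range r, ∑ j ∈ Finset.range i, φ ^ j with hW
  have hgeom : (∑ i ∈ Finset.range r, φ ^ i) * (φ - 1) = 0 := by
    rw [geom_sum_mul, hφr, sub_self]
  have hg : ∑ i ∈ Finset.range r, φ ^ i
      = r • (1 : AddMonoid.End (Additive ↥N)) + W * (φ - 1) := by
    rw [hW, Finset.sum_mul,
      Finset.sum_congr rfl (fun i _ => geom_sum_mul φ i),
      Finset.sum_sub_distrib, Finset.sum_const, Finset.card_range]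
    abel
  have h0 : r • (φ - 1) + W * ((φ - 1) * (φ - 1)) = 0 := by
    have h := hgeom
    rw [hg, add_mul, smul_mul_assoc, one_mul, mul_assoc] at h
    exact h
  have hrD : r • (φ - 1) = (-W) * ((φ - 1) * (φ - 1)) := by
    rw [neg_mul W ((φ - 1) * (φ - 1))]
    exact eq_neg_of_add_eq_zero_left h0
  have hiter : ∀ k : ℕ, (r ^ k) • (φ - 1) = (-W) ^ k * (φ - 1) ^ (k + 1) := by
    intro k
    induction k with
    | zero => rw [pow_zero, one_smul, pow_zero, one_mul, pow_one]
    | succ k ih =>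
      rw [pow_succ' r k, mul_smul, ih, ← mul_smul_comm, pow_succ' (φ - 1) k,
        ← smul_mul_assoc, hrD, pow_succ (-W) k, pow_succ' (φ - 1) (k + 1),
        pow_succ' (φ - 1) k]
      simp only [mul_assoc]
  obtain ⟨m, hm⟩ : ∃ m, n = m + 1 := ⟨n - 1, by omega⟩
  have hDn : (φ - 1) ^ n = 0 := by
    have h1 : φ - 1 = (-1) * F :=
      ((neg_one_mul F).trans (neg_sub 1 φ)).symm
    rw [h1, (Commute.neg_one_left F).mul_pow, hFn, mul_zero]
  have hfin : (r ^ (n - 1)) • (φ - 1) = 0 := by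
    have := hiter m
    rw [hm] at hDn
    rw [hm, Nat.add_sub_cancel, this, hDn, mul_zero]
  -- apply to a
  set x₀ : Additive ↥N := Additive.ofMul (⟨a, ha⟩ : ↥N) with hx₀
  have happ : (r ^ (n - 1)) • ((φ - 1) x₀) = 0 := by
    have h := DFunLike.congr_fun hfin x₀
    rwa [hnsm, AddMonoid.End.zero_apply] at h
  set b : ↥N := Additive.toMul ((φ - 1) x₀) with hb
  have hbval : (b : G) = (t * a * t⁻¹) * a⁻¹ := by
    rw [hb]
    show ((Additive.toMul ((φ - 1) (Additive.ofMul (⟨a, ha⟩ : ↥N))) : ↥N) : G) = _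
    rw [hsub, AddMonoid.End.one_apply, hφval, toMul_sub,
      toMul_ofMul, toMul_ofMul]
    push_cast
    show (t * a * t⁻¹ : G) / a = _
    rw [div_eq_mul_inv]
  have hbpow : (b : G) ^ r ^ (n - 1) = 1 := by
    have : Additive.toMul ((r ^ (n - 1)) • ((φ - 1) x₀)) = (1 : ↥N) := by
      rw [happ]; rfl
    rw [toMul_nsmul] at this
    have := congrArg (Subtype.val) this
    push_cast at this
    exact this
  have hb1 : (b : G) = 1 := htriv _ b.2 hbpow
  rw [hbval] at hb1
  calc t * a = ((t * a * t⁻¹) * a⁻¹) * (a * t) := by group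
  _ = a * t := by rw [hb1, one_mul]
end
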